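/- For all a, b ∈ ℤY one has (S_• ∖ a) * (S_• ∖ b) = S_• ∖ (a * (S_• ∖ b)) + (S_• ∖ a) / (S_• ∖ b). -/

import Mathlib

/-!
Since `S_• ∖ S_x = S_{(|,x)}` and all three products are bilinear, it suffices to take
`a = S_x` and `b = S_y`. Then `(|,x)/(|,y) = ((|,x),y)` and `(|,x)∖(|,y) = (|,x∖(|,y))`, and
the interval between them consists of its bottom `((|,x),y)` and of the trees `(|,w)` with `w`
in `[x/(|,y), x∖(|,y)]`; these give the two terms of the right-hand side.
A tree above `((|,x),y)` is either `((|,x'),y')` with `x ≤ x'`, `y ≤ y'`, or, after the root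
rotation, `(|,w)` with `(x,y) ≤ w`. In the first case it lies below `(|,x∖(|,y))` only if
`(x',y') ≤ x∖(|,y)`, and comparing the vectors of left-subtree sizes (which rotations decrease
componentwise, strictly decreasing their sum) forces `x' = x` and `y' = y`.
-/


/-- A planar binary tree: either the trivial tree (a leaf) or an ordered pair of
planar binary trees. -/
inductive PBT : Type
  | leaf : PBT
  | node : PBT → PBT → PBT
  deriving DecidableEq

namespace PBT

/-- Number of internal vertices of a planar binary tree. -/
def size : PBT → ℕ
  | leaf => 0
  | node a b => a.size + b.size + 1

/-- One covering move of the Tamari order: `Rot x y` holds when `y` is obtained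
from `x` by replacing some subtree of the form `((a,b),c)` by `(a,(b,c))`. -/
inductive Rot : PBT → PBT → Prop
  | rot (a b c : PBT) : Rot (node (node a b) c) (node a (node b c))
  | left {a a' : PBT} (b : PBT) : Rot a a' → Rot (node a b) (node a' b)
  | right (a : PBT) {b b' : PBT} : Rot b b' → Rot (node a b) (node a b')

/-- The Tamari order: reflexive-transitive closure of `Rot`. -/
def tle (x y : PBT) : Prop := Relation.ReflTransGen Rot x y

/-- Grafting of `x` on the leftmost leaf of `y` : the operation `x / y`. -/
def over' : PBT → PBT → PBT
  | x, leaf => x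
  | x, node y₁ y₂ => node (over' x y₁) y₂

/-- Grafting of `y` on the rightmost leaf of `x` : the operation `x ∖ y`. -/
def under : PBT → PBT → PBT
  | leaf, y => y
  | node x₁ x₂, y => node x₁ (under x₂ y)

theorem Rot.size_eq {x y : PBT} (h : Rot x y) : x.size = y.size := by
  induction h <;> simp [size] <;> omega

theorem tle.size_eq {x y : PBT} (h : tle x y) : x.size = y.size := by
  induction h with
  | refl => rfl
  | tail _ h ih => rw [ih, h.size_eq]

theorem finite_size_le (n : ℕ) : {z : PBT | z.size ≤ n}.Finite := by
  induction n with
  | zero =>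
    apply Set.Finite.subset (Set.finite_singleton leaf)
    rintro (_ | ⟨a, b⟩) hz
    · simp
    · simp [size] at hz
  | succ n ih =>
    apply Set.Finite.subset ((Set.Finite.image2 node ih ih).insert leaf)
    rintro (_ | ⟨a, b⟩) hz
    · simp
    · simp only [Set.mem_setOf_eq, size] at hz
      exact Set.mem_insert_iff.mpr
        (Or.inr (Set.mem_image2.mpr ⟨a, by simp only [Set.mem_setOf_eq]; omega, b, by simp only [Set.mem_setOf_eq]; omega, rfl⟩))

theorem finite_size (n : ℕ) : {z : PBT | z.size = n}.Finite :=
  (finite_size_le n).subset fun _ hz => le_of_eq hz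

theorem finite_tle_right (x : PBT) : {y : PBT | tle y x}.Finite :=
  (finite_size x.size).subset fun _ hy => hy.size_eq

theorem finite_tle_left (x : PBT) : {y : PBT | tle x y}.Finite :=
  (finite_size x.size).subset fun _ hy => hy.size_eq.symm

theorem finite_interval (x y : PBT) :
    {z : PBT | tle (over' x y) z ∧ tle z (under x y)}.Finite :=
  (finite_tle_right (under x y)).subset fun _ hz => hz.2

end PBT

/-- The free abelian group `ℤY = ⊕ₙ ℤYₙ` on the set of all planar binary trees. -/
abbrev ZY : Type := PBT →₀ ℤ

namespace PBT

/-- The basis element `S_x` of `ℤY`. -/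
noncomputable def S (x : PBT) : ZY := Finsupp.single x 1

/-- The class `P_x = ∑_{y ≤ x} S_y` of the projective module. -/
noncomputable def P (x : PBT) : ZY := ∑ y ∈ (finite_tle_right x).toFinset, S y

/-- The class `I_x = ∑_{y ≥ x} S_y` of the injective module. -/
noncomputable def I (x : PBT) : ZY := ∑ y ∈ (finite_tle_left x).toFinset, S y

/-- The Loday-Ronco product on basis elements:
`S_x * S_y = ∑_{x/y ≤ z ≤ x∖y} S_z`. -/
noncomputable def starB (x y : PBT) : ZY := ∑ z ∈ (finite_interval x y).toFinset, S z

/-- Bilinear extension of a product defined on basis elements. -/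
noncomputable def bilin (f : PBT → PBT → ZY) (a b : ZY) : ZY :=
  a.sum fun x ax => b.sum fun y byy => (ax * byy) • f x y

/-- The product `/` on `ℤY`, with `S_x / S_y = S_{x/y}`. -/
noncomputable def overM : ZY → ZY → ZY := bilin fun x y => S (x.over' y)

/-- The product `∖` on `ℤY`, with `S_x ∖ S_y = S_{x∖y}`. -/
noncomputable def underM : ZY → ZY → ZY := bilin fun x y => S (x.under y)

/-- The Loday-Ronco product `*` on `ℤY`. -/
noncomputable def starM : ZY → ZY → ZY := bilin starB

/-- The unique planar binary tree `•` with one internal vertex. -/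
def dot : PBT := node leaf leaf

end PBT

namespace List

theorem Forall₂.trans {α : Type*} {R : α → α → Prop} [IsTrans α R] :
    ∀ {l₁ l₂ l₃ : List α}, Forall₂ R l₁ l₂ → Forall₂ R l₂ l₃ → Forall₂ R l₁ l₃
  | _, _, _, .nil, .nil => .nil
  | _, _, _, .cons h₁ t₁, .cons h₂ t₂ => .cons (_root_.trans h₁ h₂) (t₁.trans t₂)

end List

namespace PBT

theorem tle.refl (x : PBT) : tle x x := Relation.ReflTransGen.refl

theorem tle.trans {x y z : PBT} (hxy : tle x y) (hyz : tle y z) : tle x z :=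
  Relation.ReflTransGen.trans hxy hyz

theorem tle.node_left {a a' : PBT} (b : PBT) (h : tle a a') : tle (node a b) (node a' b) :=
  Relation.ReflTransGen.lift (node · b) (fun _ _ => Rot.left b) _ _ h

theorem tle.node_right (a : PBT) {b b' : PBT} (h : tle b b') : tle (node a b) (node a b') :=
  Relation.ReflTransGen.lift (node a) (fun _ _ => Rot.right a) _ _ h

theorem tle.node {a a' b b' : PBT} (ha : tle a a') (hb : tle b b') :
    tle (node a b) (node a' b') :=
  (ha.node_left b).trans (hb.node_right a')

theorem node_tle_under_node_leaf : ∀ u v : PBT, tle (node u v) (under u (node leaf v))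
  | leaf, _ => tle.refl _
  | node a b, v =>
    Relation.ReflTransGen.head (Rot.rot a b v) ((node_tle_under_node_leaf b v).node_right a)

theorem exists_eq_node_leaf_of_tle {w z : PBT} (h : tle (node leaf w) z) :
    ∃ w', tle w w' ∧ z = node leaf w' := by
  induction h with
  | refl => exact ⟨w, tle.refl w, rfl⟩
  | tail _ step ih =>
    obtain ⟨w', hw, rfl⟩ := ih
    cases step with
    | left _ h => cases h
    | right _ h => exact ⟨_, hw.tail h, rfl⟩

theorem cases_of_node_node_leaf_tle {x y z : PBT} (h : tle (node (node leaf x) y) z) :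
    (∃ x' y', tle x x' ∧ tle y y' ∧ z = node (node leaf x') y') ∨
      ∃ w, tle (node x y) w ∧ z = node leaf w := by
  induction h with
  | refl => exact .inl ⟨x, y, tle.refl x, tle.refl y, rfl⟩
  | tail _ step ih =>
    rcases ih with ⟨x', y', hx, hy, rfl⟩ | ⟨w, hw, rfl⟩
    · cases step with
      | rot => exact .inr ⟨node x' y', hx.node hy, rfl⟩
      | left _ h =>
        cases h with
        | left _ h => cases h
        | right _ h => exact .inl ⟨_, y', hx.tail h, hy, rfl⟩
      | right _ h => exact .inl ⟨x', _, hx, hy.tail h, rfl⟩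
    · cases step with
      | left _ h => cases h
      | right _ h => exact .inr ⟨_, hw.tail h, rfl⟩

def leftSizes : PBT → List ℕ
  | leaf => []
  | node a b => leftSizes a ++ a.size :: leftSizes b

theorem length_leftSizes : ∀ t : PBT, (leftSizes t).length = t.size
  | leaf => rfl
  | node a b => by simp [leftSizes, size, length_leftSizes a, length_leftSizes b]; omega

theorem leftSizes_under : ∀ a v : PBT, leftSizes (under a v) = leftSizes a ++ leftSizes v
  | leaf, _ => rfl
  | node a b, v => by simp [under, leftSizes, leftSizes_under b v]

theorem Rot.leftSizes_le {t t' : PBT} (h : Rot t t') :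
    List.Forall₂ (· ≤ ·) (leftSizes t') (leftSizes t) := by
  have hrefl (l : List ℕ) : List.Forall₂ (· ≤ ·) l l := List.forall₂_refl l
  induction h with
  | rot a b c =>
    simp only [leftSizes, List.append_assoc, List.cons_append]
    exact List.rel_append (hrefl _)
      (.cons le_rfl (List.rel_append (hrefl _) (.cons (by simp only [size]; omega) (hrefl _))))
  | left b h ih =>
    simp only [leftSizes, h.size_eq]
    exact List.rel_append ih (.cons le_rfl (hrefl _))
  | right a _ ih => exact List.rel_append (hrefl _) (.cons le_rfl ih)

theorem Rot.sum_leftSizes_lt {t t' : PBT} (h : Rot t t') :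
    (leftSizes t').sum < (leftSizes t).sum := by
  induction h with
  | rot a b c => simp [leftSizes, size, List.sum_append]
  | left b h ih => simp only [leftSizes, List.sum_append, List.sum_cons, h.size_eq]; omega
  | right a _ ih => simp only [leftSizes, List.sum_append, List.sum_cons]; omega

theorem tle.leftSizes_le {t t' : PBT} (h : tle t t') :
    List.Forall₂ (· ≤ ·) (leftSizes t') (leftSizes t) := by
  induction h with
  | refl => exact List.forall₂_refl _
  | tail _ step ih => exact step.leftSizes_le.trans ih

theorem tle.eq_of_sum_leftSizes_le {t t' : PBT} (h : tle t t')
    (hsum : (leftSizes t).sum ≤ (leftSizes t').sum) : t = t' := by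
  cases h with
  | refl => rfl
  | tail h step =>
    have := step.sum_leftSizes_lt
    have := tle.leftSizes_le h |>.sum_le_sum
    omega

theorem eq_of_node_tle_under_node_leaf {x y x' y' : PBT} (hx : tle x x') (hy : tle y y')
    (h : tle (node x' y') (under x (node leaf y))) : x' = x ∧ y' = y := by
  have hle : List.Forall₂ (· ≤ ·) (leftSizes x ++ 0 :: leftSizes y)
      (leftSizes x' ++ x'.size :: leftSizes y') := by
    simpa only [leftSizes_under, leftSizes, size, List.nil_append, List.cons_append]
      using h.leftSizes_le
  have hlen : (leftSizes x).length = (leftSizes x').length := by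
    rw [length_leftSizes, length_leftSizes, hx.size_eq]
  have hxle := List.forall₂_take_append _ _ _ hle
  have hyle := List.forall₂_drop_append _ _ _ hle
  rw [List.take_left' hlen] at hxle
  rw [List.drop_left' hlen] at hyle
  exact ⟨(hx.eq_of_sum_leftSizes_le hxle.sum_le_sum).symm,
    (hy.eq_of_sum_leftSizes_le (List.forall₂_cons.1 hyle).2.sum_le_sum).symm⟩

theorem bilin_eq_linearCombination (f : PBT → PBT → ZY) (a b : ZY) :
    bilin f a b =
      Finsupp.linearCombination ℤ (fun x => Finsupp.linearCombination ℤ (f x)) a b := by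
  simp only [bilin, Finsupp.linearCombination_apply, Finsupp.sum, LinearMap.sum_apply,
    LinearMap.smul_apply, Finset.smul_sum, mul_smul]

section Bilinear

variable (f : PBT → PBT → ZY)

theorem bilin_add_left (a a' b : ZY) : bilin f (a + a') b = bilin f a b + bilin f a' b := by
  simp only [bilin_eq_linearCombination, map_add, LinearMap.add_apply]

theorem bilin_add_right (a b b' : ZY) : bilin f a (b + b') = bilin f a b + bilin f a b' := by
  simp only [bilin_eq_linearCombination, map_add]

theorem bilin_zero_left (b : ZY) : bilin f 0 b = 0 := by
  simp only [bilin_eq_linearCombination, map_zero, LinearMap.zero_apply]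

theorem bilin_zero_right (a : ZY) : bilin f a 0 = 0 := by
  simp only [bilin_eq_linearCombination, map_zero]

theorem bilin_smul_right (a : ZY) (r : ℤ) (b : ZY) : bilin f a (r • b) = r • bilin f a b := by
  simp only [bilin_eq_linearCombination, map_smul]

theorem bilin_sum_right {ι : Type*} (a : ZY) (s : Finset ι) (b : ι → ZY) :
    bilin f a (∑ i ∈ s, b i) = ∑ i ∈ s, bilin f a (b i) := by
  simp only [bilin_eq_linearCombination, map_sum]

theorem bilin_single_single (x y : PBT) (r s : ℤ) :
    bilin f (Finsupp.single x r) (Finsupp.single y s) = (r * s) • f x y := by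
  simp [bilin_eq_linearCombination, mul_comm r, mul_smul]

end Bilinear

theorem underM_dot_single (t : PBT) (r : ℤ) :
    underM (S dot) (Finsupp.single t r) = Finsupp.single (node leaf t) r := by
  simp [underM, S, bilin_single_single, under, dot]

theorem mem_interval_node_leaf_iff (x y z : PBT) :
    (tle (node (node leaf x) y) z ∧ tle z (node leaf (under x (node leaf y)))) ↔
      z = node (node leaf x) y ∨
        ∃ w, (tle (node x y) w ∧ tle w (under x (node leaf y))) ∧ node leaf w = z := by
  constructor
  · rintro ⟨hlow, hup⟩
    rcases cases_of_node_node_leaf_tle hlow with ⟨x', y', hx, hy, rfl⟩ | ⟨w, hw, rfl⟩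
    · left
      obtain ⟨w, hw, heq⟩ := (cases_of_node_node_leaf_tle hup).resolve_left
        fun ⟨_, _, _, _, h⟩ => by cases h
      cases heq
      obtain ⟨rfl, rfl⟩ := eq_of_node_tle_under_node_leaf hx hy hw
      rfl
    · obtain ⟨w', hw', heq⟩ := exists_eq_node_leaf_of_tle hup
      cases heq
      exact .inr ⟨w, ⟨hw, hw'⟩, rfl⟩
  · have hroot : tle (node (node leaf x) y) (node leaf (node x y)) := .single (.rot leaf x y)
    rintro (rfl | ⟨w, ⟨hlow, hup⟩, rfl⟩)
    · exact ⟨tle.refl _, hroot.trans ((node_tle_under_node_leaf x y).node_right leaf)⟩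
    · exact ⟨hroot.trans (hlow.node_right leaf), hup.node_right leaf⟩

theorem interval_node_leaf (x y : PBT) :
    (finite_interval (node leaf x) (node leaf y)).toFinset =
      insert (node (node leaf x) y)
        ((finite_interval x (node leaf y)).toFinset.image (node leaf)) := by
  ext z
  simp only [Set.Finite.mem_toFinset, Set.mem_setOf_eq, Finset.mem_insert, Finset.mem_image]
  exact mem_interval_node_leaf_iff x y z

theorem starB_node_leaf (x y : PBT) :
    starB (node leaf x) (node leaf y) =
      underM (S dot) (starB x (node leaf y)) + S (node (node leaf x) y) := by
  have hbottom :
      node (node leaf x) y ∉ (finite_interval x (node leaf y)).toFinset.image (node leaf) := by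
    simp
  have hunder : underM (S dot) (starB x (node leaf y)) =
      ∑ w ∈ (finite_interval x (node leaf y)).toFinset, S (node leaf w) := by
    rw [starB, underM, bilin_sum_right]
    exact Finset.sum_congr rfl fun w _ => underM_dot_single w 1
  rw [hunder, starB, interval_node_leaf, Finset.sum_insert hbottom,
    Finset.sum_image fun _ _ _ _ h => (node.inj h).2, add_comm]

theorem starM_single_node_leaf (x y : PBT) (r s : ℤ) :
    starM (Finsupp.single (node leaf x) r) (Finsupp.single (node leaf y) s) =
      underM (S dot) (starM (Finsupp.single x r) (Finsupp.single (node leaf y) s))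
        + overM (Finsupp.single (node leaf x) r) (Finsupp.single (node leaf y) s) := by
  simp only [starM, overM, bilin_single_single, starB_node_leaf, smul_add]
  congr 1
  exact (bilin_smul_right _ _ _ _).symm

end PBT

open PBT in
/-- `(S_• ∖ a) * (S_• ∖ b) = S_• ∖ (a * (S_• ∖ b)) + (S_• ∖ a) / (S_• ∖ b)`. -/
theorem dendriform_lemma (a b : ZY) :
    starM (underM (S dot) a) (underM (S dot) b) =
      underM (S dot) (starM a (underM (S dot) b))
        + overM (underM (S dot) a) (underM (S dot) b) := by
  induction a using Finsupp.induction_linear with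
  | zero => simp only [starM, overM, underM, bilin_zero_left, bilin_zero_right, add_zero]
  | add a a' ha ha' =>
    simp only [starM, overM, underM, bilin_add_left, bilin_add_right] at ha ha' ⊢
    rw [ha, ha']
    abel
  | single x r =>
    induction b using Finsupp.induction_linear with
    | zero => simp only [starM, overM, underM, bilin_zero_right, add_zero]
    | add b b' hb hb' =>
      simp only [starM, overM, underM, bilin_add_right] at hb hb' ⊢
      rw [hb, hb']
      abel
    | single y s =>
      rw [underM_dot_single, underM_dot_single]
      exact starM_single_node_leaf x y r s
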